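/- For any bi-infinite sequence (a_i) ∈ {1,2,3,4}^ℤ whose Markov value m((a_i)) := sup_{n∈ℤ} λ_n((a_i)) is strictly less than 4.55, the sequence cannot contain the subword 4,1 or the subword 4,2 (nor 1,4 nor 2,4). -/

import Mathlib

/-!
Write `λₙ = aₙ + 1/y + 1/y'` with `y = [aₙ₋₁; aₙ₋₂, …]` and `y' = [aₙ₊₁; aₙ₊₂, …]`.
Starting from `[1, 5]` and iterating `x = d + 1/y` three times shows that every continued
fraction with partial quotients in `{1, …, 4}` lies in `[35/29, 29/6]`; hence `1/y, 1/y' ≥ 6/29`,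
and a neighbour `≤ 2` of a digit `4` makes the corresponding value at most `2 + 29/35`, so its
inverse is at least `35/99`. Then `λₙ ≥ 4 + 6/29 + 35/99 > 4.56`.
-/

/-- Continued fraction numerators: `(cfP a n).1 = pₙ`, `(cfP a n).2 = pₙ₋₁`,
with `p₋₁ = 1`, `p₀ = a₀`, `pₙ₊₁ = aₙ₊₁ pₙ + pₙ₋₁`. -/
noncomputable def cfP (a : ℕ → ℝ) : ℕ → ℝ × ℝ
  | 0 => (a 0, 1)
  | n + 1 => (a (n + 1) * (cfP a n).1 + (cfP a n).2, (cfP a n).1)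

/-- Continued fraction denominators: `(cfQ a n).1 = qₙ`, `(cfQ a n).2 = qₙ₋₁`,
with `q₋₁ = 0`, `q₀ = 1`, `qₙ₊₁ = aₙ₊₁ qₙ + qₙ₋₁`. -/
noncomputable def cfQ (a : ℕ → ℝ) : ℕ → ℝ × ℝ
  | 0 => (1, 0)
  | n + 1 => (a (n + 1) * (cfQ a n).1 + (cfQ a n).2, (cfQ a n).1)

/-- The `n`-th convergent `[a₀; a₁, …, aₙ] = pₙ/qₙ` of the continued fraction with
partial quotients `a`. -/
noncomputable def cfConv (a : ℕ → ℝ) (n : ℕ) : ℝ := (cfP a n).1 / (cfQ a n).1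

/-- `x` is the value of the infinite continued fraction `[a₀; a₁, a₂, …]`, i.e. the limit
of its convergents. -/
def IsCFVal (a : ℕ → ℝ) (x : ℝ) : Prop :=
  Filter.Tendsto (cfConv a) Filter.atTop (nhds x)

/-- `lam n` is `λₙ` of the bi-infinite sequence `a`: the sum of the values of the
continued fractions `[aₙ; aₙ₋₁, …]` and `[0; aₙ₊₁, …]`. -/
def IsLambda (a : ℤ → ℕ) (lam : ℤ → ℝ) : Prop :=
  ∀ n : ℤ, ∃ ℓL ℓR : ℝ,
    IsCFVal (fun k => (a (n - (k : ℤ)) : ℝ)) ℓL ∧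
    IsCFVal (fun k => if k = 0 then 0 else (a (n + (k : ℤ)) : ℝ)) ℓR ∧
    lam n = ℓL + ℓR

open Set Filter Topology

section ContinuedFraction

variable {a : ℕ → ℝ}

lemma one_le_cfP_fst (h : ∀ k, 1 ≤ a k) (n : ℕ) : 1 ≤ (cfP a n).1 := by
  suffices ∀ n, 1 ≤ (cfP a n).1 ∧ 0 ≤ (cfP a n).2 from (this n).1
  intro n
  induction n with
  | zero => exact ⟨h 0, zero_le_one⟩
  | succ n ih =>
    obtain ⟨hfst, hsnd⟩ := ih
    exact ⟨by simp only [cfP]; nlinarith [h (n + 1)], by simp only [cfP]; linarith⟩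

lemma one_le_cfQ_fst (h : ∀ k, 1 ≤ a (k + 1)) (n : ℕ) : 1 ≤ (cfQ a n).1 := by
  suffices ∀ n, 1 ≤ (cfQ a n).1 ∧ 0 ≤ (cfQ a n).2 from (this n).1
  intro n
  induction n with
  | zero => exact ⟨le_rfl, le_rfl⟩
  | succ n ih =>
    obtain ⟨hfst, hsnd⟩ := ih
    exact ⟨by simp only [cfQ]; nlinarith [h n], by simp only [cfQ]; linarith⟩

lemma cfP_cfQ_succ (n : ℕ) :
    cfP a (n + 1) = a 0 • cfP (fun k => a (k + 1)) n + cfQ (fun k => a (k + 1)) n ∧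
      cfQ a (n + 1) = cfP (fun k => a (k + 1)) n := by
  induction n with
  | zero => refine ⟨?_, ?_⟩ <;> ext <;> simp [cfP, cfQ, mul_comm]
  | succ n ih =>
    rw [cfP.eq_2 a (n + 1), cfQ.eq_2 a (n + 1), ih.1, ih.2, cfP.eq_2 _ n, cfQ.eq_2 _ n]
    refine ⟨?_, rfl⟩
    ext
    · simp only [Prod.fst_add, Prod.snd_add, Prod.smul_fst, Prod.smul_snd, smul_eq_mul]; ring
    · simp

lemma cfConv_succ (h : ∀ k, 1 ≤ a (k + 1)) (n : ℕ) :
    cfConv a (n + 1) = a 0 + (cfConv (fun k => a (k + 1)) n)⁻¹ := by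
  have hp := one_le_cfP_fst (a := fun k => a (k + 1)) h n
  have hq := one_le_cfQ_fst (a := fun k => a (k + 1)) (fun k => h (k + 1)) n
  obtain ⟨hP, hQ⟩ := cfP_cfQ_succ (a := a) n
  rw [cfConv, cfConv, hP, hQ, Prod.fst_add, Prod.smul_fst, smul_eq_mul]
  field_simp

variable {M : ℝ}

lemma cfConv_mem_Icc (h : ∀ k, a k ∈ Icc 1 M) (n : ℕ) : cfConv a n ∈ Icc 1 (M + 1) := by
  induction n generalizing a with
  | zero =>
    simp only [cfConv, cfP, cfQ, div_one]
    exact ⟨(h 0).1, by linarith [(h 0).2]⟩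
  | succ n ih =>
    obtain ⟨hc1, hc2⟩ := ih (a := fun k => a (k + 1)) (fun k => h (k + 1))
    rw [cfConv_succ (fun k => (h (k + 1)).1)]
    have : 0 < (cfConv (fun k => a (k + 1)) n)⁻¹ := by positivity
    have := inv_le_one_of_one_le₀ hc1
    constructor <;> linarith [(h 0).1, (h 0).2]

lemma IsCFVal.exists_tail {x : ℝ} (h : ∀ k, a (k + 1) ∈ Icc 1 M) (hx : IsCFVal a x) :
    ∃ y, IsCFVal (fun k => a (k + 1)) y ∧ x = a 0 + y⁻¹ := by
  set c := cfConv (fun k => a (k + 1))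
  have hc : ∀ n, c n ∈ Icc 1 (M + 1) := cfConv_mem_Icc h
  have hinv : Tendsto (fun n => (c n)⁻¹) atTop (𝓝 (x - a 0)) := by
    have := (hx.comp (tendsto_add_atTop_nat 1)).sub_const (a 0)
    refine this.congr fun n => ?_
    simp [Function.comp, cfConv_succ (fun k => (h k).1), c]
  have hM : 0 < M + 1 := zero_lt_one.trans_le ((hc 0).1.trans (hc 0).2)
  have hpos : 0 < x - a 0 := (inv_pos.2 hM).trans_le <|
    ge_of_tendsto' hinv fun n => inv_anti₀ (by linarith [(hc n).1]) (hc n).2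
  refine ⟨(x - a 0)⁻¹, ?_, by rw [inv_inv]; ring⟩
  have := hinv.inv₀ hpos.ne'
  simp only [inv_inv] at this
  exact this

end ContinuedFraction

def boundedCFValues (M : ℝ) : Set ℝ :=
  {x | ∃ a : ℕ → ℝ, (∀ k, a k ∈ Icc 1 M) ∧ IsCFVal a x}

section BoundedCFValues

variable {M : ℝ}

lemma boundedCFValues_subset_Icc : boundedCFValues M ⊆ Icc 1 (M + 1) := by
  rintro x ⟨a, ha, hx⟩
  exact isClosed_Icc.mem_of_tendsto hx (Eventually.of_forall (cfConv_mem_Icc ha))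

lemma boundedCFValues_subset_Icc_of_subset {l u l' u' : ℝ} (hS : boundedCFValues M ⊆ Icc l u)
    (hl : 0 < l) (hl' : l' ≤ 1 + u⁻¹) (hu' : M + l⁻¹ ≤ u') : boundedCFValues M ⊆ Icc l' u' := by
  rintro x ⟨a, ha, hx⟩
  obtain ⟨y, hy, rfl⟩ := hx.exists_tail fun k => ha (k + 1)
  obtain ⟨hly, hyu⟩ := hS ⟨_, fun k => ha (k + 1), hy⟩
  have := inv_anti₀ hl hly
  have := inv_anti₀ (hl.trans_le hly) hyu
  constructor <;> linarith [(ha 0).1, (ha 0).2]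

lemma boundedCFValues_four_subset : boundedCFValues 4 ⊆ Icc (35 / 29) (29 / 6) := by
  have h₀ : boundedCFValues 4 ⊆ Icc 1 5 :=
    boundedCFValues_subset_Icc.trans (Icc_subset_Icc le_rfl (by norm_num))
  have h₁ : boundedCFValues 4 ⊆ Icc (6 / 5) 5 :=
    boundedCFValues_subset_Icc_of_subset h₀ one_pos (by norm_num) (by norm_num)
  have h₂ : boundedCFValues 4 ⊆ Icc (6 / 5) (29 / 6) :=
    boundedCFValues_subset_Icc_of_subset h₁ (by norm_num) (by norm_num) (by norm_num)
  exact boundedCFValues_subset_Icc_of_subset h₂ (by norm_num) (by norm_num) (by norm_num)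

lemma IsCFVal.le_head_add {a : ℕ → ℝ} {x : ℝ} (h : ∀ k, a (k + 1) ∈ Icc 1 4)
    (hx : IsCFVal a x) : x ≤ a 0 + 29 / 35 := by
  obtain ⟨y, hy, rfl⟩ := hx.exists_tail h
  have := inv_anti₀ (by norm_num) (boundedCFValues_four_subset ⟨_, h, hy⟩).1
  norm_num at this
  linarith

lemma IsCFVal.le_inv_of_digits_le_four {a : ℕ → ℝ} {x : ℝ} (h : ∀ k, a k ∈ Icc 1 4)
    (hx : IsCFVal a x) : 6 / 29 ≤ x⁻¹ := by
  have hx' := boundedCFValues_four_subset ⟨_, h, hx⟩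
  simpa using inv_anti₀ (by linarith [hx'.1]) hx'.2

lemma IsCFVal.le_inv_of_head_le_two {a : ℕ → ℝ} {x : ℝ} (h : ∀ k, a k ∈ Icc 1 4)
    (h₀ : a 0 ≤ 2) (hx : IsCFVal a x) : 35 / 99 ≤ x⁻¹ := by
  have hpos : 0 < x := by linarith [(boundedCFValues_four_subset ⟨_, h, hx⟩).1]
  have := hx.le_head_add fun k => h (k + 1)
  simpa using inv_anti₀ hpos (show x ≤ 99 / 35 by linarith)

end BoundedCFValues

section Lambda

variable {a : ℤ → ℕ} {lam : ℤ → ℝ}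

lemma natCast_mem_Icc_one_four (hdig : ∀ i, 1 ≤ a i ∧ a i ≤ 4) (i : ℤ) : (a i : ℝ) ∈ Icc 1 4 :=
  ⟨mod_cast (hdig i).1, mod_cast (hdig i).2⟩

lemma IsLambda.exists_eq_add_inv_add_inv (hlam : IsLambda a lam) (hdig : ∀ i, 1 ≤ a i ∧ a i ≤ 4)
    (n : ℤ) :
    ∃ yL yR, IsCFVal (fun k => (a (n - ((k + 1 : ℕ) : ℤ)) : ℝ)) yL ∧
      IsCFVal (fun k => (a (n + ((k + 1 : ℕ) : ℤ)) : ℝ)) yR ∧ lam n = a n + yL⁻¹ + yR⁻¹ := by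
  obtain ⟨ℓL, ℓR, hL, hR, hℓ⟩ := hlam n
  obtain ⟨yL, hyL, rfl⟩ := hL.exists_tail fun k => natCast_mem_Icc_one_four hdig _
  obtain ⟨yR, hyR, rfl⟩ :=
    hR.exists_tail (M := 4) fun k => by simpa using natCast_mem_Icc_one_four hdig _
  refine ⟨yL, yR, hyL, by simpa using hyR, ?_⟩
  simp only [hℓ, CharP.cast_eq_zero, sub_zero, ↓reduceIte, zero_add]

lemma IsLambda.bddAbove (hlam : IsLambda a lam) (hdig : ∀ i, 1 ≤ a i ∧ a i ≤ 4) :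
    BddAbove (range lam) := by
  refine ⟨6, ?_⟩
  rintro _ ⟨n, rfl⟩
  obtain ⟨yL, yR, hyL, hyR, hn⟩ := hlam.exists_eq_add_inv_add_inv hdig n
  have hL := (boundedCFValues_four_subset ⟨_, fun k => natCast_mem_Icc_one_four hdig _, hyL⟩).1
  have hR := (boundedCFValues_four_subset ⟨_, fun k => natCast_mem_Icc_one_four hdig _, hyR⟩).1
  have := inv_le_one_of_one_le₀ (show 1 ≤ yL by linarith)
  have := inv_le_one_of_one_le₀ (show 1 ≤ yR by linarith)
  linarith [(natCast_mem_Icc_one_four hdig n).2]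

lemma IsLambda.lt_of_eq_four (hlam : IsLambda a lam) (hdig : ∀ i, 1 ≤ a i ∧ a i ≤ 4) {n : ℤ}
    (h₄ : a n = 4) (hnb : a (n - 1) ≤ 2 ∨ a (n + 1) ≤ 2) : 4.55 < lam n := by
  obtain ⟨yL, yR, hyL, hyR, hn⟩ := hlam.exists_eq_add_inv_add_inv hdig n
  have hdigL : ∀ k, (a (n - ((k + 1 : ℕ) : ℤ)) : ℝ) ∈ Icc 1 4 :=
    fun k => natCast_mem_Icc_one_four hdig _
  have hdigR : ∀ k, (a (n + ((k + 1 : ℕ) : ℤ)) : ℝ) ∈ Icc 1 4 :=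
    fun k => natCast_mem_Icc_one_four hdig _
  have hL := hyL.le_inv_of_digits_le_four hdigL
  have hR := hyR.le_inv_of_digits_le_four hdigR
  rw [hn, h₄]
  rcases hnb with h | h
  · have := hyL.le_inv_of_head_le_two hdigL (by simpa using (Nat.cast_le (α := ℝ)).2 h)
    norm_num
    linarith
  · have := hyR.le_inv_of_head_le_two hdigR (by simpa using (Nat.cast_le (α := ℝ)).2 h)
    norm_num
    linarith

end Lambda

/-- Any bi-infinite sequence with digits in `{1,2,3,4}` whose Markov value
`m(a) = ⨆ n, λₙ(a)` is strictly less than `4.55` contains no subword `41`, `14`,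
`42` or `24`. -/
theorem stmt_17 (a : ℤ → ℕ) (hdig : ∀ i, 1 ≤ a i ∧ a i ≤ 4)
    (lam : ℤ → ℝ) (hlam : IsLambda a lam)
    (hM : (⨆ n : ℤ, lam n) < 4.55) :
    ∀ n : ℤ, ¬(a n = 4 ∧ a (n + 1) = 1) ∧ ¬(a n = 1 ∧ a (n + 1) = 4) ∧
      ¬(a n = 4 ∧ a (n + 1) = 2) ∧ ¬(a n = 2 ∧ a (n + 1) = 4) := by
  have key : ∀ p, a p = 4 → ¬(a (p - 1) ≤ 2 ∨ a (p + 1) ≤ 2) := fun p h₄ hnb =>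
    ((le_ciSup (hlam.bddAbove hdig) p).trans_lt hM).not_gt (hlam.lt_of_eq_four hdig h₄ hnb)
  intro n
  refine ⟨?_, ?_, ?_, ?_⟩ <;> rintro ⟨h₁, h₂⟩
  · exact key n h₁ (.inr (by omega))
  · exact key (n + 1) h₂ (.inl (by simp [h₁]))
  · exact key n h₁ (.inr (by omega))
  · exact key (n + 1) h₂ (.inl (by simp [h₁]))
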